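/- Let X be a pure n-dimensional weighted simplicial complex, n > 1, with all links of dimension > 0 connected. For every -1 ≤ k ≤ n-2 and every ordered k-simplex τ, the spectrum of the upper 0-Laplacian Δ^+_{τ,0} on the link X_τ is contained in [0, (n-k)/(n-k-1)]. -/

import Mathlib

open Finset

open scoped Classical

/-- `X` is (the face set of) an abstract simplicial complex: downward closed. -/
def IsSC {V : Type*} [DecidableEq V] (X : Finset (Finset V)) : Prop :=
  ∀ s ∈ X, ∀ t ⊆ s, t ∈ X

/-- `X` is pure `n`-dimensional: every face is contained in a face of cardinality `n+1`. -/
def IsPure {V : Type*} [DecidableEq V] (X : Finset (Finset V)) (n : ℕ) : Prop :=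
  ∀ s ∈ X, ∃ t ∈ X, s ⊆ t ∧ t.card = n + 1

/-- A weight function on a pure `n`-dimensional complex `X`. -/
def IsWeight {V : Type*} [DecidableEq V] (X : Finset (Finset V)) (n : ℕ) (m : Finset V → ℝ) :
    Prop :=
  (∀ s ∈ X, 0 < m s) ∧
  ∀ s ∈ X, s.card ≤ n →
    m s = ∑ t ∈ X.filter (fun t => s ⊆ t ∧ t.card = s.card + 1), m t

/-- An ordered simplex of `X` with `a` vertices (an ordered `(a-1)`-simplex, element of
`Σ(a-1)`): an injective tuple whose image is a face of `X`. -/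
def OSimp {V : Type*} [Fintype V] [DecidableEq V] (X : Finset (Finset V)) {a : ℕ}
    (f : Fin a → V) : Prop :=
  Function.Injective f ∧ Finset.image f Finset.univ ∈ X

/-- A `(a-1)`-form: an antisymmetric real function on ordered tuples. -/
def IsForm {V : Type*} {a : ℕ} (φ : (Fin a → V) → ℝ) : Prop :=
  ∀ (f : Fin a → V) (π : Equiv.Perm (Fin a)),
    φ (f ∘ π) = ((Equiv.Perm.sign π : ℤ) : ℝ) * φ f

/-- The weighted inner product `⟨φ,ψ⟩ = Σ_{f ∈ Σ(a-1)} (m(f)/a!) φ(f) ψ(f)` on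
`(a-1)`-forms. -/
noncomputable def formIP {V : Type*} [Fintype V] [DecidableEq V] (X : Finset (Finset V))
    (m : Finset V → ℝ) {a : ℕ} (φ ψ : (Fin a → V) → ℝ) : ℝ :=
  ∑ f : Fin a → V,
    if OSimp X f then (m (Finset.image f Finset.univ) / (Nat.factorial a : ℝ)) * (φ f * ψ f)
    else 0

/-- The simplicial differential `d : C^{a-1} → C^a`. -/
def dOp {V : Type*} {a : ℕ} (φ : (Fin a → V) → ℝ) : (Fin (a + 1) → V) → ℝ :=
  fun f => ∑ i : Fin (a + 1), (-1 : ℝ) ^ (i : ℕ) * φ (fun j => f (i.succAbove j))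

/-- The codifferential `δ : C^a → C^{a-1}`, given by
`(δφ)(τ) = Σ_{v : vτ ∈ Σ(a)} (m(vτ)/m(τ)) φ(vτ)`. -/
noncomputable def deltaOp {V : Type*} [Fintype V] [DecidableEq V] (X : Finset (Finset V))
    (m : Finset V → ℝ) {a : ℕ} (φ : (Fin (a + 1) → V) → ℝ) : (Fin a → V) → ℝ :=
  fun τ => ∑ v : V,
    if OSimp X (Fin.cons v τ : Fin (a + 1) → V) then
      (m (Finset.image (Fin.cons v τ : Fin (a + 1) → V) Finset.univ) /
        m (Finset.image τ Finset.univ)) * φ (Fin.cons v τ)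
    else 0

/-- The vertices of the link of the face `τ`. -/
def linkVerts {V : Type*} [Fintype V] [DecidableEq V] (X : Finset (Finset V)) (τ : Finset V) :
    Finset V :=
  Finset.univ.filter (fun v => v ∉ τ ∧ insert v τ ∈ X)

/-- The upper `0`-Laplacian `Δ⁺_{τ,0}` of the link of the face `τ`, with the induced weight
`m_τ(σ) = m(τ ∪ σ)`:  `Δ⁺φ(u) = φ(u) - Σ_{v : {u,v} ∈ X_τ} (m_τ({u,v})/m_τ({u})) φ(v)`. -/
noncomputable def linkLap {V : Type*} [Fintype V] [DecidableEq V] (X : Finset (Finset V))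
    (m : Finset V → ℝ) (τ : Finset V) (φ : V → ℝ) : V → ℝ :=
  fun u => φ u -
    ∑ v ∈ Finset.univ.filter (fun v => v ∉ insert u τ ∧ insert v (insert u τ) ∈ X),
      (m (insert v (insert u τ)) / m (insert u τ)) * φ v

/-- `μ` is an eigenvalue of the upper `0`-Laplacian of the link of `τ`. -/
def linkEig {V : Type*} [Fintype V] [DecidableEq V] (X : Finset (Finset V)) (m : Finset V → ℝ)
    (τ : Finset V) (μ : ℝ) : Prop :=
  ∃ φ : V → ℝ, (∀ v, v ∉ linkVerts X τ → φ v = 0) ∧ (∃ u ∈ linkVerts X τ, φ u ≠ 0) ∧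
    ∀ u ∈ linkVerts X τ, linkLap X m τ φ u = μ * φ u

/-- The link of the face `τ` is a connected: any two of its vertices are joined by a path of
edges of the link. -/
def linkConn {V : Type*} [Fintype V] [DecidableEq V] (X : Finset (Finset V)) (τ : Finset V) :
    Prop :=
  ∀ u ∈ linkVerts X τ, ∀ v ∈ linkVerts X τ,
    Relation.ReflTransGen
      (fun a b => a ∈ linkVerts X τ ∧ b ∈ linkVerts X τ ∧ a ≠ b ∧ insert a (insert b τ) ∈ X)
      u v

/-!
For an eigenfunction `φ` with eigenvalue `μ`, pairing the eigenvalue equation with `m_τ φ` gives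
`μ ‖φ‖² = ‖φ‖² - ⟨φ, Aφ⟩`. The balance condition lets one push the weights of the link down to the
top faces `t ⊇ τ`: with `d = n - |τ|`, `L t = ∑_{u ∈ t \ τ} φ u` and `Q t = ∑_{u ∈ t \ τ} φ u ²`,
`‖φ‖² = d! ∑_t m t Q t` and `⟨φ, Aφ⟩ = (d - 1)! ∑_t m t (L t ² - Q t)`.
Since `t \ τ` has `d + 1` vertices, Cauchy–Schwarz `L t ² ≤ (d + 1) Q t` gives
`⟨φ, Aφ⟩ ≤ ‖φ‖²`, i.e. `μ ≥ 0`, while `L t ² ≥ 0` gives `-‖φ‖² ≤ d ⟨φ, Aφ⟩`, i.e.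
`μ ≤ (d + 1) / d`.
-/

section WeightedComplex

variable {V : Type*} [Fintype V] [DecidableEq V] {X : Finset (Finset V)} {n : ℕ}
  {m : Finset V → ℝ}

lemma mem_linkVerts {s : Finset V} {v : V} : v ∈ linkVerts X s ↔ v ∉ s ∧ insert v s ∈ X := by
  simp [linkVerts]

lemma weight_eq_sum_linkVerts (hm : IsWeight X n m) {s : Finset V} (hs : s ∈ X)
    (hcard : s.card ≤ n) : m s = ∑ v ∈ linkVerts X s, m (insert v s) := by
  have hinj : Set.InjOn (insert · s) (linkVerts X s) := fun a ha _ _ h =>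
    (insert_inj (mem_linkVerts.1 ha).1).1 h
  rw [hm.2 s hs hcard, ← sum_image hinj]
  congr 1
  ext t
  simp only [mem_filter, mem_image, mem_linkVerts]
  constructor
  · rintro ⟨htX, hst, hcard⟩
    obtain ⟨v, hv, rfl⟩ := exists_eq_insert_iff.2 ⟨hst, hcard.symm⟩
    exact ⟨v, ⟨hv, htX⟩, rfl⟩
  · rintro ⟨v, ⟨hv, hvX⟩, rfl⟩
    exact ⟨hvX, subset_insert _ _, card_insert_of_notMem hv⟩

lemma sum_linkVerts_sum_superset (hSC : IsSC X) (N : ℕ) (s : Finset V)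
    (G : V → Finset V → ℝ) :
    ∑ v ∈ linkVerts X s, ∑ t ∈ X with t.card = N ∧ insert v s ⊆ t, G v t =
      ∑ t ∈ X with t.card = N ∧ s ⊆ t, ∑ v ∈ t \ s, G v t := by
  refine Finset.sum_comm' fun v t => ?_
  simp only [mem_linkVerts, mem_filter, mem_sdiff, insert_subset_iff]
  constructor
  · rintro ⟨⟨hvs, -⟩, htX, htN, hvt, hst⟩
    exact ⟨⟨hvt, hvs⟩, htX, htN, hst⟩
  · rintro ⟨⟨hvt, hvs⟩, htX, htN, hst⟩
    exact ⟨⟨hvs, hSC t htX _ (insert_subset hvt hst)⟩, htX, htN, hvt, hst⟩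

/- `(n + 1 - |s|)!` counts the maximal chains of faces from `s` up to a top face `t ⊇ s`. -/
lemma weight_eq_factorial_mul_sum_top (hSC : IsSC X) (hm : IsWeight X n m) {s : Finset V}
    (hs : s ∈ X) (hcard : s.card ≤ n + 1) :
    m s = (n + 1 - s.card).factorial * ∑ t ∈ X with t.card = n + 1 ∧ s ⊆ t, m t := by
  generalize hj : n + 1 - s.card = j
  induction j generalizing s with
  | zero =>
    have htop : {t ∈ X | t.card = n + 1 ∧ s ⊆ t} = {s} := by
      ext t
      simp only [mem_filter, mem_singleton]
      constructor
      · rintro ⟨-, htc, hst⟩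
        exact (eq_of_subset_of_card_le hst (by omega)).symm
      · rintro rfl
        exact ⟨hs, by omega, subset_rfl⟩
    simp [htop]
  | succ j ih =>
    have hlink : ∀ v ∈ linkVerts X s,
        m (insert v s) = j.factorial * ∑ t ∈ X with t.card = n + 1 ∧ insert v s ⊆ t, m t := by
      intro v hv
      obtain ⟨hvs, hvX⟩ := mem_linkVerts.1 hv
      exact ih hvX (by rw [card_insert_of_notMem hvs]; omega)
        (by rw [card_insert_of_notMem hvs]; omega)
    have hcount : ∀ t ∈ {t ∈ X | t.card = n + 1 ∧ s ⊆ t},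
        ∑ _v ∈ t \ s, m t = (j + 1) * m t := by
      intro t ht
      obtain ⟨-, htc, hst⟩ := mem_filter.1 ht
      rw [sum_const, card_sdiff_of_subset hst, show t.card - s.card = j + 1 by omega,
        nsmul_eq_mul, Nat.cast_succ]
    rw [weight_eq_sum_linkVerts hm hs (by omega), sum_congr rfl hlink, ← mul_sum,
      sum_linkVerts_sum_superset hSC, sum_congr rfl hcount, ← mul_sum, Nat.factorial_succ]
    push_cast
    ring

lemma sum_linkVerts_weight_mul (hSC : IsSC X) (hm : IsWeight X n m) {s : Finset V}
    (hs : s.card ≤ n) (g : V → ℝ) :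
    ∑ v ∈ linkVerts X s, m (insert v s) * g v =
      (n - s.card).factorial * ∑ t ∈ X with t.card = n + 1 ∧ s ⊆ t, m t * ∑ v ∈ t \ s, g v := by
  have hlink : ∀ v ∈ linkVerts X s, m (insert v s) * g v =
      ∑ t ∈ X with t.card = n + 1 ∧ insert v s ⊆ t, (n - s.card).factorial * (m t * g v) := by
    intro v hv
    obtain ⟨hvs, hvX⟩ := mem_linkVerts.1 hv
    have hc := card_insert_of_notMem hvs
    rw [weight_eq_factorial_mul_sum_top hSC hm hvX (by omega), hc,
      show n + 1 - (s.card + 1) = n - s.card by omega, mul_assoc, sum_mul, mul_sum]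
  rw [sum_congr rfl hlink, sum_linkVerts_sum_superset hSC, mul_sum]
  simp only [mul_sum]

end WeightedComplex

section LinkForms

variable {V : Type*} [Fintype V] [DecidableEq V]

/-- `‖φ‖²` for the induced weight `m_τ(u) = m(τ ∪ {u})` on the link of `τ`. -/
noncomputable def linkNormSq (X : Finset (Finset V)) (m : Finset V → ℝ) (τ : Finset V)
    (φ : V → ℝ) : ℝ :=
  ∑ u ∈ linkVerts X τ, m (insert u τ) * φ u ^ 2

/-- `⟨φ, Aφ⟩` for the weighted adjacency operator of the link of `τ`. -/
noncomputable def linkAdjForm (X : Finset (Finset V)) (m : Finset V → ℝ) (τ : Finset V)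
    (φ : V → ℝ) : ℝ :=
  ∑ u ∈ linkVerts X τ, φ u * ∑ v ∈ linkVerts X (insert u τ), m (insert v (insert u τ)) * φ v

variable {X : Finset (Finset V)} {n : ℕ} {m : Finset V → ℝ} {τ : Finset V} (φ : V → ℝ)

lemma sum_weight_mul_linkLap (hpos : ∀ s ∈ X, 0 < m s) :
    ∑ u ∈ linkVerts X τ, m (insert u τ) * φ u * linkLap X m τ φ u =
      linkNormSq X m τ φ - linkAdjForm X m τ φ := by
  rw [linkNormSq, linkAdjForm, ← sum_sub_distrib]
  refine sum_congr rfl fun u hu => ?_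
  have hmu : m (insert u τ) ≠ 0 := (hpos _ (mem_linkVerts.1 hu).2).ne'
  rw [linkLap, mul_sub, mul_sum, mul_sum]
  congr 1
  · ring
  · exact sum_congr rfl fun v _ => by field_simp

lemma linkNormSq_pos (hpos : ∀ s ∈ X, 0 < m s) {u : V} (hu : u ∈ linkVerts X τ)
    (hφu : φ u ≠ 0) : 0 < linkNormSq X m τ φ :=
  sum_pos' (fun v hv => mul_nonneg (hpos _ (mem_linkVerts.1 hv).2).le (sq_nonneg _))
    ⟨u, hu, mul_pos (hpos _ (mem_linkVerts.1 hu).2) (by positivity)⟩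

lemma linkNormSq_eq (hSC : IsSC X) (hm : IsWeight X n m) (hτ : τ.card ≤ n) :
    linkNormSq X m τ φ =
      (n - τ.card).factorial * ∑ t ∈ X with t.card = n + 1 ∧ τ ⊆ t, m t * ∑ u ∈ t \ τ, φ u ^ 2 :=
  sum_linkVerts_weight_mul hSC hm hτ _

lemma linkAdjForm_eq (hSC : IsSC X) (hm : IsWeight X n m) (hτ : τ.card + 1 ≤ n) :
    linkAdjForm X m τ φ = (n - τ.card - 1).factorial * ∑ t ∈ X with t.card = n + 1 ∧ τ ⊆ t,
      m t * ((∑ u ∈ t \ τ, φ u) ^ 2 - ∑ u ∈ t \ τ, φ u ^ 2) := by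
  have hinner : ∀ u ∈ linkVerts X τ,
      φ u * ∑ v ∈ linkVerts X (insert u τ), m (insert v (insert u τ)) * φ v =
        ∑ t ∈ X with t.card = n + 1 ∧ insert u τ ⊆ t,
          (n - τ.card - 1).factorial * (m t * (φ u * ∑ v ∈ t \ insert u τ, φ v)) := by
    intro u hu
    have hc := card_insert_of_notMem (mem_linkVerts.1 hu).1
    rw [sum_linkVerts_weight_mul hSC hm (by omega), hc,
      show n - (τ.card + 1) = n - τ.card - 1 by omega, mul_sum, mul_sum]
    exact sum_congr rfl fun t _ => by ring
  rw [linkAdjForm, sum_congr rfl hinner, sum_linkVerts_sum_superset hSC, mul_sum]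
  refine sum_congr rfl fun t _ => ?_
  rw [← mul_sum, ← mul_sum]
  congr 2
  calc ∑ u ∈ t \ τ, φ u * ∑ v ∈ t \ insert u τ, φ v
      = ∑ u ∈ t \ τ, (φ u * ∑ v ∈ t \ τ, φ v - φ u ^ 2) :=
        sum_congr rfl fun u hu => by rw [sdiff_insert, sum_erase_eq_sub hu]; ring
    _ = (∑ u ∈ t \ τ, φ u) ^ 2 - ∑ u ∈ t \ τ, φ u ^ 2 := by rw [sum_sub_distrib, ← sum_mul, sq]

lemma linkAdjForm_le_linkNormSq (hSC : IsSC X) (hm : IsWeight X n m) (hτ : τ.card + 1 ≤ n) :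
    linkAdjForm X m τ φ ≤ linkNormSq X m τ φ := by
  obtain ⟨k, hk⟩ : ∃ k, n - τ.card = k + 1 := ⟨n - τ.card - 1, by omega⟩
  rw [linkNormSq_eq φ hSC hm (by omega), linkAdjForm_eq φ hSC hm hτ, hk, Nat.add_sub_cancel,
    ← sub_nonneg, mul_sum, mul_sum, ← sum_sub_distrib]
  refine sum_nonneg fun t ht => ?_
  obtain ⟨htX, htc, hτt⟩ := mem_filter.1 ht
  have hcard : ((t \ τ).card : ℝ) = k + 2 := by
    rw [card_sdiff_of_subset hτt, show t.card - τ.card = k + 2 by omega]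
    push_cast
    ring
  have hCS := sq_sum_le_card_mul_sum_sq (s := t \ τ) (f := φ)
  rw [hcard] at hCS
  have hterm : 0 ≤ k.factorial * m t *
      ((k + 2) * ∑ u ∈ t \ τ, φ u ^ 2 - (∑ u ∈ t \ τ, φ u) ^ 2) :=
    mul_nonneg (mul_nonneg (by positivity) (hm.1 t htX).le) (by linarith)
  rw [Nat.factorial_succ]
  push_cast
  linarith

lemma neg_linkNormSq_le (hSC : IsSC X) (hm : IsWeight X n m) (hτ : τ.card + 1 ≤ n) :
    -linkNormSq X m τ φ ≤ ((n : ℝ) - τ.card) * linkAdjForm X m τ φ := by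
  obtain ⟨k, hk⟩ : ∃ k, n - τ.card = k + 1 := ⟨n - τ.card - 1, by omega⟩
  have hkR : (n : ℝ) - τ.card = k + 1 := by
    rw [← Nat.cast_sub (by omega), hk]
    push_cast
    ring
  rw [linkNormSq_eq φ hSC hm (by omega), linkAdjForm_eq φ hSC hm hτ, hk, Nat.add_sub_cancel,
    hkR, neg_le_iff_add_nonneg, Nat.factorial_succ, mul_sum, mul_sum, mul_sum, ← sum_add_distrib]
  refine sum_nonneg fun t ht => ?_
  have hmt := (hm.1 t (mem_filter.1 ht).1).le
  have hterm : 0 ≤ (k + 1) * k.factorial * m t * (∑ u ∈ t \ τ, φ u) ^ 2 := by positivity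
  push_cast
  linarith

end LinkForms

theorem stmt11_general {V : Type*} [Fintype V] [DecidableEq V] (n : ℕ)
    (X : Finset (Finset V)) (hSC : IsSC X)
    (m : Finset V → ℝ) (hm : IsWeight X n m) :
    ∀ τ ∈ X, τ.card + 1 ≤ n →
      ∀ μ : ℝ, linkEig X m τ μ →
        0 ≤ μ ∧ μ ≤ ((n : ℝ) + 1 - τ.card) / ((n : ℝ) - τ.card) := by
  rintro τ - hτ μ ⟨φ, -, ⟨u₀, hu₀, hφu₀⟩, heig⟩
  have hrayleigh : μ * linkNormSq X m τ φ = linkNormSq X m τ φ - linkAdjForm X m τ φ := by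
    rw [← sum_weight_mul_linkLap φ hm.1, linkNormSq, mul_sum]
    exact sum_congr rfl fun u hu => by rw [heig u hu]; ring
  have hpos := linkNormSq_pos φ hm.1 hu₀ hφu₀
  have hlower := linkAdjForm_le_linkNormSq φ hSC hm hτ
  have hupper := neg_linkNormSq_le φ hSC hm hτ
  have hd : (0 : ℝ) < n - τ.card := by
    have : (τ.card : ℝ) + 1 ≤ n := by exact_mod_cast hτ
    linarith
  constructor
  · nlinarith
  · rw [le_div_iff₀ hd]
    nlinarith

/-- Let `X` be a pure `n`-dimensional weighted simplicial complex, `n > 1`,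
with all links of dimension `> 0` connected.  For every `-1 ≤ k ≤ n-2` and every `k`-simplex
`τ` (face with `τ.card = k + 1 ≤ n - 1`), the spectrum of the upper `0`-Laplacian of the link
`X_τ` is contained in `[0, (n-k)/(n-k-1)] = [0, (n+1-τ.card)/(n-τ.card)]`. -/
theorem stmt11 {V : Type*} [Fintype V] [DecidableEq V] (n : ℕ) (hn : 1 < n)
    (X : Finset (Finset V)) (hSC : IsSC X) (hpure : IsPure X n)
    (hconn : ∀ s ∈ X, s.card + 1 ≤ n → linkConn X s)
    (m : Finset V → ℝ) (hm : IsWeight X n m) :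
    ∀ τ ∈ X, τ.card + 1 ≤ n →
      ∀ μ : ℝ, linkEig X m τ μ →
        0 ≤ μ ∧ μ ≤ ((n : ℝ) + 1 - τ.card) / ((n : ℝ) - τ.card) :=
  stmt11_general n X hSC m hm
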